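/- arXiv:2101.04100 — 2 statements merged into one kernel-verified Lean document; each statement's English description precedes it below -/
import Mathlib

section
/- Fix d ≥ 1, a real matrix A, and a time-symmetric second-order real basic method S for A. Let n ≥ 2 and let α_1, …, α_s ∈ ℂ be symmetric-conjugate, i.e. α_{s+1−j} = conj(α_j) for all j, and suppose the composition P(h) = S(α_s h)·S(α_{s−1} h)⋯S(α_1 h) is of even order 2n, i.e. (fun h : ℝ => P(h) − exp(h·A)) is O(h^{2n+1}) as h → 0. Let R(h) be the entrywise real part of P(h). Then (fun h : ℝ => R(h) − exp(h·A)) is O(h^{2n+1}) as h → 0 (R is of order 2n), and R is pseudo-symmetric of order 4n+3, i.e. (fun h : ℝ => R(−h)·R(h) − 1) is O(h^{4n+4}) as h → 0. -/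
/-!
Write `Q h` for the entrywise conjugate of `P h`. Reality of `S` and the symmetric-conjugate
coefficients make `Q h = S (α_1 h) ⋯ S (α_s h)`, and time symmetry of `S` then telescopes
`P (-h) Q h` to `1`. Since `P` has odd error order `2n + 1` against the exponential and the error
is analytic, its odd leading term cancels in `P (-h) P h - 1`, which is therefore
`O(h^(2n+2))`; multiplying by `Q h` gives `P h - Q h = O(h^(2n+2))`. Finally `2 R = P + Q`, and
`P (-h) Q h = Q (-h) P h = 1` turn `4 (R (-h) R h - 1)` into `(P (-h) - Q (-h)) (P h - Q h)`,
which is `O(h^(4n+4))`.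
-/

open Matrix Asymptotics Filter NormedSpace Topology

section PowerAsymptotics

variable {𝕜 E : Type*} [NontriviallyNormedField 𝕜] [NormedAddCommGroup E]

theorem AnalyticAt.comp_neg [NormedSpace 𝕜 E] {f : 𝕜 → E} {x : 𝕜} (hf : AnalyticAt 𝕜 f (-x)) :
    AnalyticAt 𝕜 (fun y => f (-y)) x :=
  hf.comp analyticAt_id.neg

theorem Asymptotics.isBigO_pow_pow_of_le {m n : ℕ} (h : m ≤ n) :
    (fun x : 𝕜 => x ^ n) =O[𝓝 0] fun x => x ^ m := by
  rcases h.lt_or_eq with h | rfl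
  · exact (isLittleO_pow_pow h).isBigO
  · exact isBigO_refl _ _

theorem Asymptotics.IsBigO.comp_neg_pow {f : 𝕜 → E} {k : ℕ}
    (h : f =O[𝓝 0] fun x => x ^ k) : (fun x => f (-x)) =O[𝓝 0] fun x => x ^ k := by
  have := (isBigO_norm_right.mpr h).comp_tendsto (by simpa using tendsto_neg (0 : 𝕜))
  exact isBigO_norm_right.mp (by simpa [Function.comp_def, norm_pow] using this)

theorem AnalyticAt.exists_eventuallyEq_pow_smul_of_isBigO [NormedSpace 𝕜 E] {f : 𝕜 → E} {m : ℕ}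
    (hf : AnalyticAt 𝕜 f 0) (hO : f =O[𝓝 0] fun x => x ^ m) :
    ∃ g : 𝕜 → E, AnalyticAt 𝕜 g 0 ∧ ∀ᶠ x in 𝓝 0, f x = x ^ m • g x := by
  suffices (m : ℕ∞) ≤ analyticOrderAt f 0 by simpa using (natCast_le_analyticOrderAt hf).mp this
  by_contra! hlt
  obtain ⟨k, hk⟩ := ENat.ne_top_iff_exists.mp (hlt.trans (ENat.natCast_lt_top m)).ne
  have hkm : k < m := by exact_mod_cast hk ▸ hlt
  obtain ⟨g, hg, hg0, hfg⟩ := hf.analyticOrderAt_eq_natCast.mp hk.symm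
  refine hg0 (tendsto_nhds_unique (l := 𝓝[≠] (0 : 𝕜))
    (hg.continuousAt.tendsto.mono_left nhdsWithin_le_nhds) ?_)
  have hgO : g =O[𝓝[≠] 0] fun x => x ^ (m - k) := by
    have := (isBigO_refl (fun x : 𝕜 => (x ^ k)⁻¹) (𝓝[≠] 0)).smul (hO.mono nhdsWithin_le_nhds)
    refine this.congr' ?_ ?_
    · filter_upwards [hfg.filter_mono nhdsWithin_le_nhds, self_mem_nhdsWithin] with x hx hx0
      rw [hx, sub_zero, inv_smul_smul₀ (pow_ne_zero _ hx0)]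
    · filter_upwards [self_mem_nhdsWithin] with x hx0
      rw [smul_eq_mul, pow_sub₀ _ hx0 hkm.le, mul_comm]
  refine hgO.trans_tendsto ?_
  simpa [Nat.sub_ne_zero_of_lt hkm] using
    ((continuous_pow (m - k)).tendsto (0 : 𝕜)).mono_left nhdsWithin_le_nhds

theorem AnalyticAt.isBigO_pow_succ_of_even [NormedSpace 𝕜 E] [CharZero 𝕜] {f : 𝕜 → E} {m : ℕ}
    (hm : Odd m) (hf : AnalyticAt 𝕜 f 0) (heven : ∀ x, f (-x) = f x)
    (hO : f =O[𝓝 0] fun x => x ^ m) : f =O[𝓝 0] fun x => x ^ (m + 1) := by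
  obtain ⟨g, hg, hfg⟩ := hf.exists_eventuallyEq_pow_smul_of_isBigO hO
  have hg1 : (fun x => g x - g 0) =O[𝓝 0] fun x => x ^ 1 := by
    simpa using hg.differentiableAt.isBigO_sub
  have h2f : (fun x => (2 : 𝕜) • f x) =ᶠ[𝓝 0]
      fun x => x ^ m • ((g x - g 0) - (g (-x) - g 0)) := by
    filter_upwards [hfg, (show Tendsto (fun x : 𝕜 => -x) (𝓝 0) (𝓝 0) by
      simpa using tendsto_neg (0 : 𝕜)).eventually hfg] with x hx hx'
    rw [two_smul]
    nth_rewrite 2 [← heven x]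
    rw [hx, hx', hm.neg_pow, neg_smul, sub_sub_sub_cancel_right, smul_sub, sub_eq_add_neg]
  have := (isBigO_refl (fun x : 𝕜 => x ^ m) (𝓝 0)).smul (hg1.sub hg1.comp_neg_pow)
  refine (isBigO_const_smul_left (two_ne_zero (α := 𝕜))).mp (this.congr' h2f.symm ?_)
  exact Eventually.of_forall fun x => by simp [pow_succ]

end PowerAsymptotics

theorem add_mul_add_eq_sub_mul_sub_add_four {R : Type*} [Ring R] {a b c d : R} (had : a * d = 1)
    (hbc : b * c = 1) : (a + b) * (c + d) = (a - b) * (c - d) + 4 := by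
  have : (a + b) * (c + d) - (a - b) * (c - d) = 2 * (a * d) + 2 * (b * c) := by noncomm_ring
  rw [← sub_eq_iff_eq_add', this, had, hbc]
  norm_num

theorem List.prod_reverse_map_mul_prod_map {ι M : Type*} [Monoid M] {f g : ι → M} (l : List ι)
    (h : ∀ i ∈ l, g i * f i = 1) : (l.map g).reverse.prod * (l.map f).prod = 1 := by
  induction l with
  | nil => simp
  | cons a l ih =>
    rw [List.forall_mem_cons] at h
    simp only [List.map_cons, List.reverse_cons, List.prod_append, List.prod_cons,
      List.prod_nil, mul_one, mul_assoc]
    rw [← mul_assoc (g a), h.1, one_mul, ih h.2]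

theorem List.ofFn_rev {α : Type*} {n : ℕ} (f : Fin n → α) :
    List.ofFn (fun i => f i.rev) = (List.ofFn f).reverse := by
  refine List.ext_getElem (by simp) fun i h₁ h₂ => ?_
  simp only [List.getElem_ofFn, List.getElem_reverse, List.length_ofFn]
  congr 1
  ext
  simp [Fin.rev]
  omega

namespace Matrix

variable {ι : Type*} [Fintype ι] [DecidableEq ι]

section LinftyOpNorm

/- Neither `exp` nor the entries of a matrix depend on the choice of norm, so they may be studied
with the submultiplicative `L∞` operator norm. -/
attribute [local instance] Matrix.linftyOpNormedAddCommGroup Matrix.linftyOpNormedSpace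
  Matrix.linftyOpNormedRing Matrix.linftyOpNormedAlgebra

theorem map_exp {α β : Type*} [NormedRing α] [NormedAlgebra ℚ α] [CompleteSpace α]
    [NormedRing β] [NormedAlgebra ℚ β] (f : α →+* β) (hf : Continuous f) (M : Matrix ι ι α) :
    (exp M).map f = exp (M.map f) :=
  -- the `L∞` operator norm induces the product uniformity
  @NormedSpace.map_exp _ _ _ _ (by exact (inferInstance : CompleteSpace (ι → ι → α))) _ _ _ _ _
    f.mapMatrix (continuous_id.matrix_map hf) M

theorem analyticAt_exp_smul_apply {𝕜 : Type*} [RCLike 𝕜] (M : Matrix ι ι 𝕜) (x : ℝ) (i j : ι) :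
    AnalyticAt ℝ (fun t : ℝ => exp (t • M) i j) x :=
  ((entryLinearMap ℝ 𝕜 i j).toContinuousLinearMap.analyticAt _).comp
    ((exp_analytic _).comp (analyticAt_id.smul analyticAt_const))

end LinftyOpNorm

end Matrix

attribute [local instance] Matrix.normedAddCommGroup Matrix.normedSpace

namespace Matrix

variable {l m n : Type*} [Fintype l] [Fintype m] [Fintype n]

theorem isBigO_mul {α R : Type*} [NormedRing R] {F : Filter α} {f : α → Matrix l m R}
    {g : α → Matrix m n R} {u v : α → ℝ} (hf : f =O[F] u) (hg : g =O[F] v) :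
    (fun x => f x * g x) =O[F] fun x => u x * v x := by
  refine isBigO_pi.mpr fun i => isBigO_pi.mpr fun k => ?_
  simp only [mul_apply]
  exact IsBigO.fun_sum fun j _ =>
    (isBigO_pi.mp (isBigO_pi.mp hf i) j).mul (isBigO_pi.mp (isBigO_pi.mp hg j) k)

theorem isBigO_map_re {α : Type*} {F : Filter α} {f : α → Matrix m n ℂ} {u : α → ℝ}
    (hf : f =O[F] u) : (fun x => (f x).map Complex.re) =O[F] u :=
  (isBigO_of_le F fun _ => (norm_le_iff (norm_nonneg _)).mpr fun _ _ =>
    (Complex.abs_re_le_norm _).trans (norm_entry_le_entrywise_sup_norm _)).trans hf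

theorem isBigO_map_ofReal_iff {α : Type*} {F : Filter α} {f : α → Matrix m n ℝ} {u : α → ℝ} :
    (fun x => (f x).map Complex.ofReal) =O[F] u ↔ f =O[F] u := by
  simp only [← isBigO_norm_left (f' := f), ← isBigO_norm_left (f' := fun x => (f x).map _),
    norm_map_eq _ _ Complex.norm_real]

section Analytic

variable {𝕜 E A : Type*} [NontriviallyNormedField 𝕜] [NormedAddCommGroup E] [NormedSpace 𝕜 E]
  [NormedRing A] [NormedAlgebra 𝕜 A] {x : E}

theorem analyticAt_mul {f : E → Matrix l m A} {g : E → Matrix m n A} (hf : AnalyticAt 𝕜 f x)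
    (hg : AnalyticAt 𝕜 g x) : AnalyticAt 𝕜 (fun y => f y * g y) x := by
  refine analyticAt_pi_iff.mpr fun i => analyticAt_pi_iff.mpr fun k => ?_
  simp only [mul_apply]
  exact Finset.analyticAt_fun_sum _ fun j _ =>
    (analyticAt_pi_iff.mp (analyticAt_pi_iff.mp hf i) j).mul
      (analyticAt_pi_iff.mp (analyticAt_pi_iff.mp hg j) k)

theorem analyticAt_list_prod [DecidableEq m] (L : List (E → Matrix m m A))
    (hL : ∀ f ∈ L, AnalyticAt 𝕜 f x) : AnalyticAt 𝕜 L.prod x := by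
  induction L with
  | nil => exact analyticAt_const
  | cons f L ih =>
    rw [List.forall_mem_cons] at hL
    exact analyticAt_mul hL.1 (ih hL.2)

end Analytic

theorem analyticAt_exp_smul {𝕜 : Type*} [RCLike 𝕜] [DecidableEq m] (M : Matrix m m 𝕜) (x : ℝ) :
    AnalyticAt ℝ (fun t : ℝ => exp (t • M)) x :=
  analyticAt_pi_iff.mpr fun i => analyticAt_pi_iff.mpr (analyticAt_exp_smul_apply M x i)

end Matrix

section Composition

variable {s : ℕ}

theorem prod_reverse_ofFn_neg_mul_prod_ofFn {R M : Type*} [Ring R] [Monoid M] {S : R → M}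
    (hS : ∀ z, S z * S (-z) = 1) (α : Fin s → R) (z : R) :
    (List.ofFn fun j => S (α j * -z)).reverse.prod * (List.ofFn fun j => S (α j * z)).prod = 1 := by
  simp only [List.ofFn_eq_map]
  exact List.prod_reverse_map_mul_prod_map _ fun j _ => by simpa [mul_neg] using hS (-(α j * z))

variable {ι : Type*} [Fintype ι] [DecidableEq ι] {S : ℂ → Matrix ι ι ℂ}

theorem map_conj_prod_reverse_ofFn (hS : ∀ z, (S z).map (starRingEnd ℂ) = S (starRingEnd ℂ z))
    {α : Fin s → ℂ} (hα : ∀ j, α j.rev = starRingEnd ℂ (α j)) (z : ℂ) :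
    ((List.ofFn fun j => S (α j * z)).reverse.prod).map (starRingEnd ℂ) =
      (List.ofFn fun j => S (α j * starRingEnd ℂ z)).prod := by
  rw [← RingHom.mapMatrix_apply, map_list_prod, List.map_reverse, List.map_ofFn]
  simp only [Function.comp_def, RingHom.mapMatrix_apply, hS, map_mul, ← hα]
  rw [List.ofFn_rev (fun j => S (α j * starRingEnd ℂ z)), List.reverse_reverse]

theorem analyticAt_prod_reverse_ofFn (hS : ∀ z, AnalyticAt ℂ S z) (α : Fin s → ℂ) (x : ℝ) :
    AnalyticAt ℝ (fun h : ℝ => (List.ofFn fun j => S (α j * h)).reverse.prod) x := by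
  have hfun : (fun h : ℝ => (List.ofFn fun j => S (α j * h)).reverse.prod) =
      (List.ofFn fun j (h : ℝ) => S (α j * h)).reverse.prod := by
    ext1 h
    simp [Pi.list_prod_apply, List.map_reverse, List.map_ofFn, Function.comp_def]
  rw [hfun]
  refine Matrix.analyticAt_list_prod _ fun f hf => ?_
  obtain ⟨j, rfl⟩ := List.mem_ofFn.mp (List.mem_reverse.mp hf)
  exact (hS _).restrictScalars.comp ((α j • Complex.ofRealCLM).analyticAt x)

end Composition

def IsPseudoSymmetric {B : Type*} [Ring B] [Norm B] (R : ℝ → B) (q : ℕ) : Prop :=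
  (fun h : ℝ => R (-h) * R h - 1) =O[𝓝 0] fun h => h ^ (q + 1)

section PseudoSymmetry

variable {ι : Type*} [Fintype ι] [DecidableEq ι]

theorem isPseudoSymmetric_of_isBigO_sub {A : Type*} [NormedRing A] [NormedAlgebra ℝ A]
    {P E : ℝ → Matrix ι ι A} {m : ℕ} (hm : Odd m) (hP : AnalyticAt ℝ P 0)
    (hE : AnalyticAt ℝ E 0) (hE0 : E 0 = 1) (hEinv : ∀ h, E (-h) * E h = 1)
    (hPE : (fun h => P h - E h) =O[𝓝 0] fun h => h ^ m) : IsPseudoSymmetric P m := by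
  set Δ := fun h => P h - E h
  have hΔ' : (fun h => Δ (-h)) =O[𝓝 0] fun h => h ^ m := hPE.comp_neg_pow
  have hΔ : AnalyticAt ℝ Δ 0 := hP.fun_sub hE
  have hΔeven : (fun h => Δ h + Δ (-h)) =O[𝓝 0] fun h => h ^ (m + 1) :=
    (hΔ.fun_add (AnalyticAt.comp_neg (by rwa [neg_zero]))).isBigO_pow_succ_of_even hm
      (fun h => by simp only [neg_neg, add_comm]) (hPE.add hΔ')
  have hE1 : (fun h => E h - 1) =O[𝓝 0] fun h => h ^ 1 := by
    simpa [hE0] using hE.differentiableAt.isBigO_sub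
  have hdecomp : ∀ h, P (-h) * P h - 1 =
      (Δ h + Δ (-h)) + ((E (-h) - 1) * Δ h + (Δ (-h) * (E h - 1) + Δ (-h) * Δ h)) := by
    intro h
    have hP' : ∀ t, P t = Δ t + E t := fun t => (sub_add_cancel _ _).symm
    rw [hP' h, hP' (-h)]
    simp only [mul_add, add_mul, sub_mul, mul_sub, mul_one, one_mul, hEinv h]
    abel
  have hm1 : 1 ≤ m := hm.pos
  have hmul₁ : (fun h => (E (-h) - 1) * Δ h) =O[𝓝 0] fun h => h ^ (m + 1) :=
    (Matrix.isBigO_mul hE1.comp_neg_pow hPE).congr_right fun h => by ring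
  have hmul₂ : (fun h => Δ (-h) * (E h - 1)) =O[𝓝 0] fun h => h ^ (m + 1) :=
    (Matrix.isBigO_mul hΔ' hE1).congr_right fun h => by ring
  have hmul₃ : (fun h => Δ (-h) * Δ h) =O[𝓝 0] fun h => h ^ (m + 1) :=
    (Matrix.isBigO_mul hΔ' hPE).trans
      ((isBigO_pow_pow_of_le (by omega : m + 1 ≤ m + m)).congr_left fun h => pow_add h m m)
  exact (hΔeven.add (hmul₁.add (hmul₂.add hmul₃))).congr_left fun h => (hdecomp h).symm

theorem IsPseudoSymmetric.map_re {P : ℝ → Matrix ι ι ℂ} {q : ℕ} (hP : IsPseudoSymmetric P q)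
    (hPc : ContinuousAt P 0) (hconj : ∀ h, P (-h) * (P h).map (starRingEnd ℂ) = 1) :
    IsPseudoSymmetric (fun h => (P h).map Complex.re) (2 * q + 1) := by
  set Q := fun h => (P h).map (starRingEnd ℂ)
  have hQP : ∀ h, Q h * P (-h) = 1 := fun h => mul_eq_one_comm.mp (hconj h)
  have hJ : (fun h => P h - Q h) =O[𝓝 0] fun h => h ^ (q + 1) := by
    have hQ : Q =O[𝓝 0] fun _ => (1 : ℝ) :=
      ((continuous_id.matrix_map Complex.continuous_conj).continuousAt.comp hPc).isBigO_one ℝ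
    refine (Matrix.isBigO_mul hQ hP).congr (fun h => ?_) fun h => one_mul _
    rw [mul_sub, ← mul_assoc, hQP, one_mul, mul_one]
  have hre : ∀ h, (2 : ℂ) • ((P h).map Complex.re).map Complex.ofReal = P h + Q h := by
    intro h
    ext i j
    simp [Q, Complex.add_conj]
  have hfactor : ∀ h, (4 : ℂ) • (((P (-h)).map Complex.re * (P h).map Complex.re - 1).map
      Complex.ofReal) = (P (-h) - Q (-h)) * (P h - Q h) := by
    intro h
    have hmap : ((P (-h)).map Complex.re * (P h).map Complex.re - 1).map Complex.ofReal =
        ((P (-h)).map Complex.re).map Complex.ofReal * ((P h).map Complex.re).map Complex.ofReal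
          - 1 := by
      change Complex.ofRealHom.mapMatrix _ = Complex.ofRealHom.mapMatrix _ * _ - 1
      rw [map_sub, map_mul, map_one]
      rfl
    have h4 : (4 : ℂ) • (1 : Matrix ι ι ℂ) = 4 := by
      rw [Algebra.smul_def, mul_one]
      rfl
    rw [hmap, smul_sub, h4, show (4 : ℂ) = 2 * 2 by norm_num, ← smul_mul_smul_comm, hre, hre,
      add_mul_add_eq_sub_mul_sub_add_four (hconj h) (by simpa using hQP (-h)), add_sub_cancel_right]
  have hJJ := (Matrix.isBigO_mul hJ.comp_neg_pow hJ).congr_right fun h => (pow_add h _ _).symm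
  refine Matrix.isBigO_map_ofReal_iff.mp
    ((isBigO_const_smul_left (c := (4 : ℂ)) (by norm_num)).mp ?_)
  exact (hJJ.congr_left fun h => (hfactor h).symm).congr_right fun h => by ring_nf

end PseudoSymmetry

theorem symmetric_conjugate_even_order_real_part_general
    (d s n : ℕ)
    (A : Matrix (Fin d) (Fin d) ℝ)
    (S : ℂ → Matrix (Fin d) (Fin d) ℂ)
    -- `S` is analytic
    (hAnal : ∀ z : ℂ, AnalyticAt ℂ S z)
    -- `S` is time-symmetric
    (hTS : ∀ z : ℂ, S z * S (-z) = 1)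
    -- `S` is real: the entrywise conjugate of `S z` is `S z̄`
    (hReal : ∀ z : ℂ, (S z).map (starRingEnd ℂ) = S (starRingEnd ℂ z))
    -- symmetric-conjugate coefficients
    (α : Fin s → ℂ)
    (hSC : ∀ j : Fin s, α (Fin.rev j) = starRingEnd ℂ (α j))
    -- the composition `P h = S (α_s h) ⋯ S (α_1 h)`
    (P : ℝ → Matrix (Fin d) (Fin d) ℂ)
    (hP : ∀ h : ℝ, P h = ((List.ofFn fun j : Fin s => S (α j * (h : ℂ))).reverse).prod)
    -- ... is of even order `2n`
    (hPord : (fun h : ℝ => P h - exp ((h : ℂ) • A.map Complex.ofReal))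
      =O[nhds 0] fun h : ℝ => h ^ (2 * n + 1))
    -- `R h` is the entrywise real part of `P h`
    (R : ℝ → Matrix (Fin d) (Fin d) ℝ)
    (hR : ∀ h : ℝ, R h = (P h).map Complex.re) :
    ((fun h : ℝ => R h - exp (h • A)) =O[nhds 0] fun h : ℝ => h ^ (2 * n + 1)) ∧
      ((fun h : ℝ => R (-h) * R h - 1) =O[nhds 0] fun h : ℝ => h ^ (4 * n + 4)) := by
  simp only [Complex.coe_smul] at hPord
  set Ac := A.map Complex.ofReal
  have hE : ∀ h : ℝ, (exp (h • A)).map Complex.ofReal = exp (h • Ac) := fun h =>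
    (Matrix.map_exp Complex.ofRealHom Complex.continuous_ofReal _).trans
      (by congr 1; ext; simp [Ac])
  have hEinv : ∀ h : ℝ, exp ((-h) • Ac) * exp (h • Ac) = 1 := fun h => by
    rw [← Matrix.exp_add_of_commute _ _ ((Commute.refl _).smul_left _ |>.smul_right _),
      ← add_smul, neg_add_cancel, zero_smul, exp_zero]
  have hconj : ∀ h : ℝ, P (-h) * (P h).map (starRingEnd ℂ) = 1 := fun h => by
    rw [hP, hP, map_conj_prod_reverse_ofFn hReal hSC, Complex.conj_ofReal, Complex.ofReal_neg]
    exact prod_reverse_ofFn_neg_mul_prod_ofFn hTS α h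
  have hPan : AnalyticAt ℝ P 0 := funext hP ▸ analyticAt_prod_reverse_ofFn hAnal α 0
  have hpseudo : IsPseudoSymmetric P (2 * n + 1) :=
    isPseudoSymmetric_of_isBigO_sub ⟨n, rfl⟩ hPan (Matrix.analyticAt_exp_smul Ac 0) (by simp)
      hEinv hPord
  refine ⟨(Matrix.isBigO_map_re hPord).congr_left fun h => ?_, ?_⟩
  · rw [← hE, hR]
    ext i j
    simp
  · simpa [IsPseudoSymmetric, hR, show 2 * (2 * n + 1) + 1 + 1 = 4 * n + 4 by ring] using
      hpseudo.map_re hPan.continuousAt hconj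

/-- Proposition 2(b) of the paper, linear/matrix form:
the real part of a symmetric-conjugate composition of even order `2n` of a
time-symmetric second-order real basic method is of order `2n` and is
pseudo-symmetric of order `4n+3`. -/
theorem symmetric_conjugate_even_order_real_part
    (d s n : ℕ) (hd : 1 ≤ d) (hn : 2 ≤ n)
    (A : Matrix (Fin d) (Fin d) ℝ)
    (S : ℂ → Matrix (Fin d) (Fin d) ℂ)
    -- `S` is analytic
    (hAnal : ∀ z : ℂ, AnalyticAt ℂ S z)
    -- `S` is time-symmetric
    (hTS : ∀ z : ℂ, S z * S (-z) = 1)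
    -- `S` is real: the entrywise conjugate of `S z` is `S z̄`
    (hReal : ∀ z : ℂ, (S z).map (starRingEnd ℂ) = S (starRingEnd ℂ z))
    -- `S` is a second-order approximation of `exp (h A)`
    (hOrd2 : (fun h : ℝ => S (h : ℂ) - exp ((h : ℂ) • A.map Complex.ofReal))
      =O[nhds 0] fun h : ℝ => h ^ 3)
    -- symmetric-conjugate coefficients
    (α : Fin s → ℂ)
    (hSC : ∀ j : Fin s, α (Fin.rev j) = starRingEnd ℂ (α j))
    -- the composition `P h = S (α_s h) ⋯ S (α_1 h)`
    (P : ℝ → Matrix (Fin d) (Fin d) ℂ)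
    (hP : ∀ h : ℝ, P h = ((List.ofFn fun j : Fin s => S (α j * (h : ℂ))).reverse).prod)
    -- ... is of even order `2n`
    (hPord : (fun h : ℝ => P h - exp ((h : ℂ) • A.map Complex.ofReal))
      =O[nhds 0] fun h : ℝ => h ^ (2 * n + 1))
    -- `R h` is the entrywise real part of `P h`
    (R : ℝ → Matrix (Fin d) (Fin d) ℝ)
    (hR : ∀ h : ℝ, R h = (P h).map Complex.re) :
    ((fun h : ℝ => R h - exp (h • A)) =O[nhds 0] fun h : ℝ => h ^ (2 * n + 1)) ∧
      ((fun h : ℝ => R (-h) * R h - 1) =O[nhds 0] fun h : ℝ => h ^ (4 * n + 4)) :=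
  symmetric_conjugate_even_order_real_part_general d s n A S hAnal hTS hReal α hSC P hP hPord R hR
end

section
/- Let L(z) = M_T(z/2)·M_V(z)·M_T(z/2) be the leapfrog matrix for the harmonic oscillator, let α = 1/2 + (√3/6)·i, and let R(h) be the entrywise real part of the matrix L(α h)·L(conj(α) h). Then (fun h : ℝ => R(h) − M_H(h)) is O(h⁵) as h → 0; that is, projecting the third-order symmetric-conjugate composition S_{αh} ∘ S_{ᾱh} onto the real axis yields a method of order 4 for the harmonic oscillator. -/
open Matrix Asymptotics Filter

attribute [local instance] Matrix.normedAddCommGroup Matrix.normedSpace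

/-- Exact evolution matrix of the harmonic oscillator `q' = p`, `p' = -q`. -/
noncomputable def MH (z : ℂ) : Matrix (Fin 2) (Fin 2) ℂ :=
  !![Complex.cos z, Complex.sin z; -Complex.sin z, Complex.cos z]

/-- Exact evolution matrix of the kinetic part. -/
def MT (z : ℂ) : Matrix (Fin 2) (Fin 2) ℂ := !![1, z; 0, 1]

/-- Exact evolution matrix of the potential part. -/
def MV (z : ℂ) : Matrix (Fin 2) (Fin 2) ℂ := !![1, 0; -z, 1]

/-- The leapfrog/Strang splitting matrix. -/
noncomputable def L (z : ℂ) : Matrix (Fin 2) (Fin 2) ℂ := MT (z / 2) * MV z * MT (z / 2)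

/-- The coefficient `α = 1/2 + (√3/6) i`. -/
noncomputable def αc : ℂ := 1 / 2 + (Real.sqrt 3 / 6 : ℝ) * Complex.I

/-- The real projection of the composition `S_{αh} ∘ S_{ᾱh}`. -/
noncomputable def Rproj (h : ℝ) : Matrix (Fin 2) (Fin 2) ℝ :=
  (L (αc * (h : ℂ)) * L (starRingEnd ℂ αc * (h : ℂ))).map Complex.re

/-- Exact (real) evolution matrix of the harmonic oscillator. -/
noncomputable def MHr (h : ℝ) : Matrix (Fin 2) (Fin 2) ℝ :=
  !![Real.cos h, Real.sin h; -Real.sin h, Real.cos h]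

/-!
The leapfrog matrix `L z` has polynomial entries with real coefficients, so the conjugate of an
entry of `L z * L (conj z)` is the same entry with `z` and `conj z` swapped. Hence the real part
`(w + conj w) / 2` of each entry is symmetric in `z, conj z`, i.e. a polynomial in `t = 2 re z`
and `p = |z|²`. For `z = α h` we get `t = h`, `p = h² / 3`, and the entries of `R h` become the
Taylor polynomials of `cos h` and `sin h` through degree 4, up to an extra `h⁵ / 72`. What is left
is the Taylor remainder of `exp (i h)` at order 5.
-/

open ComplexConjugate Topology

lemma L_eq (z : ℂ) : L z = !![1 - z ^ 2 / 2, z - z ^ 3 / 4; -z, 1 - z ^ 2 / 2] := by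
  ext i j
  fin_cases i <;> fin_cases j <;> simp [L, MT, MV, Matrix.mul_apply] <;> ring

lemma re_L_mul_L_conj (z : ℂ) :
    (L z * L (conj z)).map Complex.re =
      let t := 2 * z.re; let p := Complex.normSq z
      !![1 - t ^ 2 / 2 + p * t ^ 2 / 8, t - t ^ 3 / 4 + p * t / 4 + p ^ 2 * t / 8;
        -t + p * t / 2, 1 - t ^ 2 / 2 + p * t ^ 2 / 8] := by
  have ht : ((2 * z.re : ℝ) : ℂ) = z + conj z := by push_cast; rw [Complex.re_eq_add_conj]; ring
  have hp : (Complex.normSq z : ℂ) = z * conj z := (Complex.mul_conj z).symm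
  ext i j
  apply Complex.ofReal_injective
  rw [Matrix.map_apply, Complex.re_eq_add_conj, L_eq, L_eq]
  fin_cases i <;> fin_cases j <;>
    simp only [Fin.zero_eta, Fin.mk_one, Fin.isValue, Matrix.mul_apply, Fin.sum_univ_two, of_apply,
      cons_val', cons_val_fin_one, cons_val_zero, cons_val_one, map_add, map_sub, map_neg, map_mul,
      map_div₀, map_pow, map_one, map_ofNat, Complex.conj_conj, Complex.ofReal_add,
      Complex.ofReal_sub, Complex.ofReal_neg, Complex.ofReal_mul, Complex.ofReal_div,
      Complex.ofReal_pow, Complex.ofReal_one, Complex.ofReal_ofNat, ht, hp] <;>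
    ring

lemma Rproj_eq (h : ℝ) : Rproj h =
    !![1 - h ^ 2 / 2 + h ^ 4 / 24, h - h ^ 3 / 6 + h ^ 5 / 72;
      -h + h ^ 3 / 6, 1 - h ^ 2 / 2 + h ^ 4 / 24] := by
  have hconj : conj αc * h = conj (αc * h) := by simp
  have hre : 2 * (αc * h).re = h := by simp [αc]
  have hnormSq : Complex.normSq (αc * h) = h ^ 2 / 3 := by
    have h3 : Real.sqrt 3 ^ 2 = 3 := Real.sq_sqrt (by norm_num)
    simp [Complex.normSq_apply, αc]
    linear_combination h ^ 2 / 36 * h3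
  rw [Rproj, hconj, re_L_mul_L_conj, hre, hnormSq]
  congrm !![?_, ?_; ?_, ?_] <;> ring

lemma exp_ofReal_mul_I_sub_taylor_isBigO :
    (fun x : ℝ => Complex.exp (x * Complex.I) -
        ((1 - x ^ 2 / 2 + x ^ 4 / 24 : ℝ) + (x - x ^ 3 / 6 : ℝ) * Complex.I)) =O[𝓝 0] (· ^ 5) := by
  have hsum (x : ℝ) : ∑ m ∈ Finset.range 5, ((x : ℂ) * Complex.I) ^ m / m.factorial =
      ((1 - x ^ 2 / 2 + x ^ 4 / 24 : ℝ) : ℂ) + ((x - x ^ 3 / 6 : ℝ) : ℂ) * Complex.I := by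
    simp [Finset.sum_range_succ, Nat.factorial, mul_pow, pow_succ]
    ring
  have hI : Tendsto (fun x : ℝ => (x : ℂ) * Complex.I) (𝓝 0) (𝓝 0) :=
    (Complex.continuous_ofReal.mul continuous_const).tendsto' 0 0 (by simp)
  refine (((Complex.exp_sub_sum_range_isBigO_pow 5).comp_tendsto hI).trans
    (isBigO_of_le (g := fun x : ℝ => x ^ 5) _ fun x => by simp [mul_pow])).congr_left fun x => ?_
  simp only [Function.comp_apply, hsum]

lemma cos_sub_taylor_isBigO :
    (fun x : ℝ => Real.cos x - (1 - x ^ 2 / 2 + x ^ 4 / 24)) =O[𝓝 0] (· ^ 5) :=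
  ((Complex.reCLM.isBigO_comp _ _).trans exp_ofReal_mul_I_sub_taylor_isBigO).congr_left
    fun x => by simp [Complex.exp_ofReal_mul_I_re, -Complex.ofReal_pow]

lemma sin_sub_taylor_isBigO :
    (fun x : ℝ => Real.sin x - (x - x ^ 3 / 6)) =O[𝓝 0] (· ^ 5) :=
  ((Complex.imCLM.isBigO_comp _ _).trans exp_ofReal_mul_I_sub_taylor_isBigO).congr_left
    fun x => by simp [Complex.exp_ofReal_mul_I_im, -Complex.ofReal_pow]

/-- projecting the third-order symmetric-conjugate composition
`S_{αh} ∘ S_{ᾱh}` onto the real axis yields a method of order 4 for the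
harmonic oscillator. -/
theorem projected_two_stage_composition_order_four :
    (fun h : ℝ => Rproj h - MHr h) =O[nhds 0] fun h : ℝ => h ^ 5 := by
  have hcos := cos_sub_taylor_isBigO
  have hsin := sin_sub_taylor_isBigO
  have hpow : (fun h : ℝ => h ^ 5 / 72) =O[𝓝 0] (· ^ 5) :=
    ((isBigO_refl _ _).const_mul_left (1 / 72 : ℝ)).congr_left fun h => by ring
  refine isBigO_pi.2 fun i => isBigO_pi.2 fun j => ?_
  fin_cases i <;> fin_cases j <;>
    simp only [Rproj_eq, MHr, Matrix.sub_apply, of_apply, cons_val', cons_val_zero, cons_val_one,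
      cons_val_fin_one, Fin.isValue, Fin.zero_eta, Fin.mk_one]
  · exact hcos.neg_left.congr_left fun h => by ring
  · exact (hpow.sub hsin).congr_left fun h => by ring
  · exact hsin.congr_left fun h => by ring
  · exact hcos.neg_left.congr_left fun h => by ring
end
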